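/- arXiv:2108.01594 — 7 statements merged into one kernel-verified Lean document; each statement's English description precedes it below -/
import Mathlib

section
/- Gibbs variational principle for MaxEnt posteriors: for every α ∈ ℝ^m and every probability distribution P on X satisfying the same moment constraints as the Gibbs distribution, i.e. ∑_{x∈X} P(x) Â_i(x) = A_i(α) for all i = 1,…,m, one has S_r[P|Q] ≤ S_r[P_α|Q], with equality if and only if P = P_α. -/
open Finset

/-- Relative entropy S_r[P|Q] = -∑ₓ P x log (P x / Q x), with 0·log 0 = 0
(in Lean `Real.log 0 = 0`, so the convention is automatic). -/
noncomputable def relEnt {X : Type*} [Fintype X] (P Q : X → ℝ) : ℝ :=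
  -∑ x, P x * Real.log (P x / Q x)

/-- Partition function Z(α) = ∑ₓ Q x exp(-∑ᵢ αᵢ Âᵢ x). -/
noncomputable def partitionZ {X : Type*} [Fintype X] {m : ℕ}
    (Q : X → ℝ) (A : Fin m → X → ℝ) (α : Fin m → ℝ) : ℝ :=
  ∑ x, Q x * Real.exp (-∑ i, α i * A i x)

/-- Gibbs distribution P_α(x) = Q x exp(-∑ᵢ αᵢ Âᵢ x) / Z(α). -/
noncomputable def gibbs {X : Type*} [Fintype X] {m : ℕ}
    (Q : X → ℝ) (A : Fin m → X → ℝ) (α : Fin m → ℝ) (x : X) : ℝ :=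
  Q x * Real.exp (-∑ i, α i * A i x) / partitionZ Q A α

/-- Moment map A_i(α) = ∑ₓ P_α(x) Âᵢ x. -/
noncomputable def moment {X : Type*} [Fintype X] {m : ℕ}
    (Q : X → ℝ) (A : Fin m → X → ℝ) (α : Fin m → ℝ) (i : Fin m) : ℝ :=
  ∑ x, gibbs Q A α x * A i x

/-- Gibbs variational principle for MaxEnt posteriors: for every α ∈ ℝ^m and
every probability distribution P on X satisfying the same moment constraints as the Gibbs
distribution P_α, one has S_r[P|Q] ≤ S_r[P_α|Q], with equality iff P = P_α. -/
theorem gibbs_variational_principle {X : Type*} [Fintype X] [Nonempty X] {m : ℕ}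
    (Q : X → ℝ) (hQpos : ∀ x, 0 < Q x) (hQsum : ∑ x, Q x = 1)
    (A : Fin m → X → ℝ) (α : Fin m → ℝ)
    (P : X → ℝ) (hPnonneg : ∀ x, 0 ≤ P x) (hPsum : ∑ x, P x = 1)
    (hmom : ∀ i, ∑ x, P x * A i x = moment Q A α i) :
    relEnt P Q ≤ relEnt (gibbs Q A α) Q ∧
      (relEnt P Q = relEnt (gibbs Q A α) Q ↔ P = gibbs Q A α) := by
  classical
  set Z := partitionZ Q A α with hZdef
  have hZpos : 0 < Z := by
    rw [hZdef, partitionZ]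
    exact Finset.sum_pos (fun x _ => mul_pos (hQpos x) (Real.exp_pos _)) univ_nonempty
  set G := gibbs Q A α with hGdef
  have hGpos : ∀ x, 0 < G x := fun x => by
    rw [hGdef, gibbs, ← hZdef]
    exact div_pos (mul_pos (hQpos x) (Real.exp_pos _)) hZpos
  have hGsum : ∑ x, G x = 1 := by
    simp only [hGdef, gibbs, ← hZdef]
    rw [← Finset.sum_div, ← partitionZ, ← hZdef, div_self hZpos.ne']
  have hGmom : ∀ i, ∑ x, G x * A i x = moment Q A α i := by
    intro i; rw [moment, hGdef]
  have hlogGQ : ∀ x, Real.log (G x / Q x) = (-∑ i, α i * A i x) - Real.log Z := by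
    intro x
    have h1 : G x / Q x = Real.exp (-∑ i, α i * A i x) / Z := by
      rw [hGdef, gibbs, ← hZdef, div_right_comm, mul_div_cancel_left₀ _ (hQpos x).ne']
    rw [h1, Real.log_div (Real.exp_pos _).ne' hZpos.ne', Real.log_exp]
  have hcross : ∀ (R : X → ℝ), (∑ x, R x = 1) → (∀ i, ∑ x, R x * A i x = moment Q A α i) →
      ∑ x, R x * Real.log (G x / Q x) = -(∑ i, α i * moment Q A α i) - Real.log Z := by
    intro R hRsum hRmom
    have h1 : ∑ x, R x * Real.log (G x / Q x)
        = ∑ x, (R x * (-∑ i, α i * A i x) - R x * Real.log Z) := by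
      refine Finset.sum_congr rfl fun x _ => ?_
      rw [hlogGQ x]; ring
    rw [h1, Finset.sum_sub_distrib, ← Finset.sum_mul, hRsum, one_mul]
    have h2 : ∑ x, R x * (-∑ i, α i * A i x) = -∑ i, α i * ∑ x, R x * A i x := by
      calc ∑ x, R x * (-∑ i, α i * A i x)
          = -∑ x, ∑ i, α i * (R x * A i x) := by
            rw [← neg_eq_iff_eq_neg, ← Finset.sum_neg_distrib]
            refine Finset.sum_congr rfl fun x _ => ?_
            simp only [mul_neg, neg_neg, Finset.mul_sum]
            exact Finset.sum_congr rfl fun i _ => by ring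
        _ = -∑ i, ∑ x, α i * (R x * A i x) := by
            congr 1; exact Finset.sum_comm
        _ = -∑ i, α i * ∑ x, R x * A i x := by
            congr 1; exact Finset.sum_congr rfl fun i _ => by rw [Finset.mul_sum]
    rw [h2]
    simp only [hRmom]
  have hsplit : ∀ x, P x * Real.log (P x / Q x)
      = P x * Real.log (P x / G x) + P x * Real.log (G x / Q x) := by
    intro x
    rcases eq_or_lt_of_le (hPnonneg x) with h | h
    · simp [← h]
    · rw [← mul_add, ← Real.log_mul (div_pos h (hGpos x)).ne' (div_pos (hGpos x) (hQpos x)).ne',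
        div_mul_div_comm, mul_comm (P x) (G x), mul_div_mul_left _ _ (hGpos x).ne']
  set D := ∑ x, P x * Real.log (P x / G x) with hDdef
  have key : relEnt P Q = relEnt G Q - D := by
    rw [relEnt, relEnt]
    have h1 : ∑ x, P x * Real.log (P x / Q x)
        = D + ∑ x, P x * Real.log (G x / Q x) := by
      rw [hDdef, ← Finset.sum_add_distrib]
      exact Finset.sum_congr rfl fun x _ => hsplit x
    have h2 : ∑ x, G x * Real.log (G x / Q x)
        = ∑ x, P x * Real.log (G x / Q x) := by
      rw [hcross G hGsum hGmom, hcross P hPsum hmom]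
    rw [h1, ← h2]; ring
  have hflip : ∀ x, P x * Real.log (G x / P x) = -(P x * Real.log (P x / G x)) := by
    intro x
    rcases eq_or_lt_of_le (hPnonneg x) with h | h
    · simp [← h]
    · rw [show G x / P x = (P x / G x)⁻¹ from (inv_div _ _).symm, Real.log_inv]; ring
  have hterm : ∀ x ∈ (univ : Finset X), P x * Real.log (G x / P x) ≤ G x - P x := by
    intro x _
    rcases eq_or_lt_of_le (hPnonneg x) with h | h
    · simp [← h]; exact (hGpos x).le
    · have hlog := Real.log_le_sub_one_of_pos (div_pos (hGpos x) h)
      have : P x * Real.log (G x / P x) ≤ P x * (G x / P x - 1) := by nlinarith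
      have heq : P x * (G x / P x - 1) = G x - P x := by field_simp
      linarith
  have hzero : ∑ x, (G x - P x) = 0 := by rw [Finset.sum_sub_distrib, hGsum, hPsum]; ring
  have hnegD : ∑ x, P x * Real.log (G x / P x) = -D := by
    rw [hDdef, ← Finset.sum_neg_distrib]
    exact Finset.sum_congr rfl fun x _ => hflip x
  have hDnonneg : 0 ≤ D := by
    have := Finset.sum_le_sum hterm
    rw [hnegD, hzero] at this
    linarith
  constructor
  · rw [key]; linarith
  constructor
  · intro heq
    have hD0 : D = 0 := by rw [key] at heq; linarith
    have hsumeq : ∑ x, P x * Real.log (G x / P x) = ∑ x, (G x - P x) := by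
      rw [hnegD, hD0, hzero, neg_zero]
    have hall := (Finset.sum_eq_sum_iff_of_le hterm).mp hsumeq
    funext x
    have hx := hall x (Finset.mem_univ x)
    rcases eq_or_lt_of_le (hPnonneg x) with h | h
    · exfalso
      rw [← h] at hx
      simp at hx
      exact absurd hx.symm (hGpos x).ne'
    · by_contra hne
      have hratio : G x / P x ≠ 1 := by
        intro hc
        rw [div_eq_one_iff_eq h.ne'] at hc
        exact hne hc.symm
      have hlog := Real.log_lt_sub_one_of_pos (div_pos (hGpos x) h) hratio
      have h1 : P x * Real.log (G x / P x) < P x * (G x / P x - 1) := by nlinarith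
      have h2 : P x * (G x / P x - 1) = G x - P x := by field_simp
      rw [hx, h2] at h1
      exact lt_irrefl _ h1
  · intro h
    have : D = 0 := by
      rw [hDdef, h]
      refine Finset.sum_eq_zero fun x _ => ?_
      rw [div_self (hGpos x).ne', Real.log_one, mul_zero]
    rw [key, this, sub_zero]
end

section
/- Injectivity of the moment map (finite Hohenberg–Kohn-type uniqueness): if the only vector c ∈ ℝ^m for which the function x ↦ ∑_{i=1}^m c_i Â_i(x) is constant on X is c = 0, then the moment map α ↦ A(α) from ℝ^m to ℝ^m is injective; i.e., A(α) = A(α') implies α = α'. -/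
open Finset

section aux
variable {X : Type*} [Fintype X] [Nonempty X] {m : ℕ}
  (Q : X → ℝ) (A : Fin m → X → ℝ) (α : Fin m → ℝ)

lemma partitionZ_pos (hQpos : ∀ x, 0 < Q x) : 0 < partitionZ Q A α := by
  apply Finset.sum_pos (fun x _ => mul_pos (hQpos x) (Real.exp_pos _))
  exact univ_nonempty

lemma gibbs_pos (hQpos : ∀ x, 0 < Q x) (x : X) : 0 < gibbs Q A α x :=
  div_pos (mul_pos (hQpos x) (Real.exp_pos _)) (partitionZ_pos Q A α hQpos)

lemma gibbs_sum (hQpos : ∀ x, 0 < Q x) : ∑ x, gibbs Q A α x = 1 := by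
  unfold gibbs
  rw [← Finset.sum_div, div_eq_one_iff_eq (partitionZ_pos Q A α hQpos).ne']
  rfl

lemma log_gibbs (hQpos : ∀ x, 0 < Q x) (x : X) :
    Real.log (gibbs Q A α x)
      = Real.log (Q x) + (-∑ i, α i * A i x) - Real.log (partitionZ Q A α) := by
  unfold gibbs
  rw [Real.log_div (mul_pos (hQpos x) (Real.exp_pos _)).ne'
      (partitionZ_pos Q A α hQpos).ne', Real.log_mul (hQpos x).ne' (Real.exp_pos _).ne',
      Real.log_exp]

end aux

/-- Injectivity of the moment map (finite Hohenberg–Kohn-type uniqueness):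
if the only c ∈ ℝ^m for which x ↦ ∑ᵢ cᵢ Âᵢ(x) is constant on X is c = 0, then
α ↦ A(α) is injective. -/
theorem moment_map_injective {X : Type*} [Fintype X] [Nonempty X] {m : ℕ}
    (Q : X → ℝ) (hQpos : ∀ x, 0 < Q x) (hQsum : ∑ x, Q x = 1)
    (A : Fin m → X → ℝ)
    (hindep : ∀ c : Fin m → ℝ, (∀ x y : X, ∑ i, c i * A i x = ∑ i, c i * A i y) → c = 0) :
    Function.Injective (fun α : Fin m → ℝ => moment Q A α) := by
  intro α β h
  have hm : ∀ i, moment Q A α i = moment Q A β i := fun i => congrFun h i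
  set Pa := gibbs Q A α with hPa
  set Pb := gibbs Q A β with hPb
  set C : ℝ := Real.log (partitionZ Q A β) - Real.log (partitionZ Q A α) with hC
  have hdiff : ∀ x, Real.log (Pa x) - Real.log (Pb x)
      = (∑ i, (β i - α i) * A i x) + C := by
    intro x
    rw [hPa, hPb, log_gibbs Q A α hQpos x, log_gibbs Q A β hQpos x]
    simp only [sub_mul, Finset.sum_sub_distrib]
    ring
  -- the doubled relative entropy vanishes
  have hS : ∑ x, (Pa x - Pb x) * (Real.log (Pa x) - Real.log (Pb x)) = 0 := by
    have : ∑ x, (Pa x - Pb x) * (Real.log (Pa x) - Real.log (Pb x))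
        = (∑ i, (β i - α i) * (moment Q A α i - moment Q A β i))
          + C * (∑ x, Pa x - ∑ x, Pb x) := by
      simp only [hdiff, mul_add, Finset.sum_add_distrib]
      congr 1
      · simp only [Finset.mul_sum]
        rw [Finset.sum_comm]
        refine Finset.sum_congr rfl fun i _ => ?_
        simp only [moment, Finset.mul_sum, ← Finset.sum_sub_distrib]
        exact Finset.sum_congr rfl fun x _ => by ring
      · rw [← Finset.sum_sub_distrib, ← Finset.sum_mul]
        ring
    rw [this, gibbs_sum Q A α hQpos, gibbs_sum Q A β hQpos]
    simp [hm]
  have hnonneg : ∀ x ∈ (univ : Finset X),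
      0 ≤ (Pa x - Pb x) * (Real.log (Pa x) - Real.log (Pb x)) := by
    intro x _
    rcases le_total (Pa x) (Pb x) with hle | hle
    · have := Real.log_le_log (gibbs_pos Q A α hQpos x) hle; nlinarith
    · have := Real.log_le_log (gibbs_pos Q A β hQpos x) hle; nlinarith
  have heq : ∀ x, Pa x = Pb x := by
    intro x
    have h0 := (Finset.sum_eq_zero_iff_of_nonneg hnonneg).1 hS x (Finset.mem_univ x)
    by_contra hne
    rcases lt_or_gt_of_ne hne with hlt | hlt
    · have hlog := Real.log_lt_log (gibbs_pos Q A α hQpos x) hlt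
      nlinarith
    · have hlog := Real.log_lt_log (gibbs_pos Q A β hQpos x) hlt
      nlinarith
  -- hence ∑ (β-α)ᵢ Âᵢ is constant
  have hconst : ∀ x : X, ∑ i, (β i - α i) * A i x = -C := by
    intro x
    have := hdiff x
    rw [heq x] at this
    linarith
  have hc : (fun i => β i - α i) = 0 := hindep _ (fun x y => by rw [hconst x, hconst y])
  funext i
  have := congrFun hc i
  simp only [Pi.zero_apply] at this
  linarith
end

section
/- Existence of Lagrange multipliers for achievable constraints: if a vector A* ∈ ℝ^m lies in the interior of the convex hull of the finite set {(Â_1(x),…,Â_m(x)) : x ∈ X} ⊆ ℝ^m, then there exists α ∈ ℝ^m with A(α) = A*; i.e., the Gibbs distribution P_α satisfies the moment constraints ∑_{x∈X} P_α(x) Â_i(x) = A*_i for all i. -/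
set_option maxHeartbeats 1000000

open Finset

lemma mul_sign_eq_abs (t : ℝ) : t * Real.sign t = |t| := by
  rcases lt_trichotomy t 0 with h | h | h
  · rw [Real.sign_of_neg h, abs_of_neg h]; ring
  · simp [h]
  · rw [Real.sign_of_pos h, abs_of_pos h]; ring

/-- Existence of Lagrange multipliers for achievable constraints: if A* lies in
the interior of the convex hull of {(Â₁(x),…,Â_m(x)) : x ∈ X} ⊆ ℝ^m, then there exists
α ∈ ℝ^m with A(α) = A*. -/
theorem exists_lagrange_multipliers {X : Type*} [Fintype X] [Nonempty X] {m : ℕ}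
    (Q : X → ℝ) (hQpos : ∀ x, 0 < Q x) (hQsum : ∑ x, Q x = 1)
    (A : Fin m → X → ℝ) (Astar : Fin m → ℝ)
    (hA : Astar ∈ interior (convexHull ℝ (Set.range fun x : X => fun i => A i x))) :
    ∃ α : Fin m → ℝ, moment Q A α = Astar := by
  classical
  set f : (Fin m → ℝ) → ℝ := fun α => Real.log (partitionZ Q A α) + ∑ i, α i * Astar i with hf
  have Zpos : ∀ α, 0 < partitionZ Q A α := fun α =>
    Finset.sum_pos (fun x _ => mul_pos (hQpos x) (Real.exp_pos _)) Finset.univ_nonempty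
  -- continuity
  have hZc : Continuous fun α : Fin m → ℝ => partitionZ Q A α := by
    unfold partitionZ
    exact continuous_finset_sum _ fun x _ =>
      (continuous_const.mul
        ((continuous_finset_sum _ fun i _ => (continuous_apply i).mul continuous_const).neg.rexp))
  have hfc : Continuous f :=
    (hZc.log fun α => (Zpos α).ne').add
      (continuous_finset_sum _ fun i _ => (continuous_apply i).mul continuous_const)
  -- ball inside hull
  obtain ⟨ε, hε, hball⟩ : ∃ ε > 0, Metric.ball Astar ε ⊆
      convexHull ℝ (Set.range fun x : X => fun i => A i x) :=
    Metric.mem_nhds_iff.mp (mem_interior_iff_mem_nhds.mp hA)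
  -- min of Q
  set c : ℝ := Finset.univ.inf' Finset.univ_nonempty Q with hc
  have hcpos : 0 < c := (Finset.lt_inf'_iff _).mpr fun x _ => hQpos x
  have hcle : ∀ x, c ≤ Q x := fun x => Finset.inf'_le _ (Finset.mem_univ x)
  -- coercivity
  have key : ∀ α : Fin m → ℝ, Real.log c + (ε / 2) * ‖α‖ ≤ f α := by
    intro α
    set p : Fin m → ℝ := fun i => Astar i - (ε / 2) * Real.sign (α i) with hp
    have hsign : ∀ t : ℝ, |Real.sign t| ≤ 1 := by
      intro t
      rcases lt_trichotomy t 0 with h | h | h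
      · simp [Real.sign_of_neg h]
      · simp [h]
      · simp [Real.sign_of_pos h]
    have hpmem : p ∈ convexHull ℝ (Set.range fun x : X => fun i => A i x) := by
      apply hball
      rw [Metric.mem_ball, dist_eq_norm]
      have : ‖p - Astar‖ ≤ ε / 2 := by
        rw [pi_norm_le_iff_of_nonneg (by positivity)]
        intro i
        simp only [hp, Pi.sub_apply, Real.norm_eq_abs]
        rw [show Astar i - ε / 2 * Real.sign (α i) - Astar i = -(ε / 2 * Real.sign (α i)) by ring,
          abs_neg, abs_mul, abs_of_pos (by positivity : (0:ℝ) < ε / 2)]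
        nlinarith [hsign (α i)]
      linarith
    -- half space
    obtain ⟨x₀, -, hx₀⟩ := Finset.exists_min_image Finset.univ
      (fun x : X => ∑ i, α i * A i x) Finset.univ_nonempty
    have hlin : IsLinearMap ℝ fun y : Fin m → ℝ => ∑ i, α i * y i :=
      ⟨fun a b => by simp [mul_add, Finset.sum_add_distrib],
       fun r a => by simp [Finset.mul_sum]; ring_nf; simp [mul_comm, mul_left_comm]⟩
    have hhull : convexHull ℝ (Set.range fun x : X => fun i => A i x) ⊆
        {y : Fin m → ℝ | (∑ i, α i * A i x₀) ≤ ∑ i, α i * y i} := by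
      apply convexHull_min _ (convex_halfSpace_ge hlin _)
      rintro y ⟨x, rfl⟩
      exact hx₀ x (Finset.mem_univ x)
    have hxp : (∑ i, α i * A i x₀) ≤ ∑ i, α i * p i := hhull hpmem
    have hsum : ∑ i, α i * p i = (∑ i, α i * Astar i) - (ε / 2) * ∑ i, |α i| := by
      simp only [hp, mul_sub, Finset.sum_sub_distrib]
      rw [Finset.mul_sum]
      congr 1
      apply Finset.sum_congr rfl
      intro i _
      rw [← mul_sign_eq_abs (α i)]; ring
    have hnorm : ‖α‖ ≤ ∑ i, |α i| := by
      rw [pi_norm_le_iff_of_nonneg (Finset.sum_nonneg fun i _ => abs_nonneg _)]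
      intro i
      rw [Real.norm_eq_abs]
      exact Finset.single_le_sum (fun j _ => abs_nonneg (α j)) (Finset.mem_univ i)
    -- lower bound for log Z
    have hZlb : Real.log c - ∑ i, α i * A i x₀ ≤ Real.log (partitionZ Q A α) := by
      have h1 : Q x₀ * Real.exp (-∑ i, α i * A i x₀) ≤ partitionZ Q A α := by
        rw [partitionZ]
        exact Finset.single_le_sum (f := fun x => Q x * Real.exp (-∑ i, α i * A i x))
          (fun x _ => le_of_lt (mul_pos (hQpos x) (Real.exp_pos _)))
          (Finset.mem_univ x₀)
      have h2 : c * Real.exp (-∑ i, α i * A i x₀) ≤ partitionZ Q A α :=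
        le_trans (mul_le_mul_of_nonneg_right (hcle x₀) (Real.exp_pos _).le) h1
      calc Real.log c - ∑ i, α i * A i x₀
          = Real.log (c * Real.exp (-∑ i, α i * A i x₀)) := by
            rw [Real.log_mul hcpos.ne' (Real.exp_pos _).ne', Real.log_exp]; ring
        _ ≤ Real.log (partitionZ Q A α) :=
            Real.log_le_log (by positivity) h2
    have : Real.log c + (ε / 2) * ‖α‖ ≤
        Real.log c - (∑ i, α i * A i x₀) + ∑ i, α i * Astar i := by
      have := hxp
      rw [hsum] at this
      nlinarith [mul_le_mul_of_nonneg_left hnorm (by positivity : (0:ℝ) ≤ ε / 2)]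
    calc Real.log c + (ε / 2) * ‖α‖
        ≤ Real.log c - (∑ i, α i * A i x₀) + ∑ i, α i * Astar i := this
      _ ≤ f α := by simp only [hf]; linarith [hZlb]
  -- coercive ⇒ global min exists
  have hcoer : Filter.Tendsto f (Filter.cocompact (Fin m → ℝ)) Filter.atTop := by
    apply Filter.tendsto_atTop_mono key
    exact Filter.tendsto_atTop_add_const_left _ _
      ((tendsto_norm_cocompact_atTop).const_mul_atTop (by positivity))
  obtain ⟨α₀, hα₀⟩ := hfc.exists_forall_le' 0 (hcoer.eventually_ge_atTop (f 0))
  refine ⟨α₀, funext fun i => ?_⟩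
  -- one-dimensional derivative
  set B : X → ℝ := fun x => ∑ j, α₀ j * A j x with hB
  set g : ℝ → (Fin m → ℝ) := fun t j => α₀ j + (if j = i then t else 0) with hg
  have hgsum : ∀ (t : ℝ) (x : X), (∑ j, g t j * A j x) = B x + t * A i x := by
    intro t x
    simp only [hg, add_mul, Finset.sum_add_distrib, hB, ite_mul, zero_mul]
    rw [Finset.sum_ite_eq' Finset.univ i (fun j => t * A j x)]
    simp
  set h : ℝ → ℝ := fun t => f (g t) with hh
  have hheq : ∀ t, h t = Real.log (∑ x, Q x * Real.exp (-(B x + t * A i x)))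
      + ((∑ j, α₀ j * Astar j) + t * Astar i) := by
    intro t
    simp only [hh, hf, partitionZ]
    congr 1
    · congr 1; apply Finset.sum_congr rfl; intro x _; rw [hgsum]
    · simp only [hg, add_mul, Finset.sum_add_distrib, ite_mul, zero_mul]
      rw [Finset.sum_ite_eq' Finset.univ i (fun j => t * Astar j)]
      simp
  have hS0 : (∑ x, Q x * Real.exp (-(B x + (0:ℝ) * A i x))) = partitionZ Q A α₀ := by
    apply Finset.sum_congr rfl; intro x _; simp [hB, partitionZ]
  have hSpos : (0:ℝ) < ∑ x, Q x * Real.exp (-(B x + (0:ℝ) * A i x)) := by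
    rw [hS0]; exact Zpos α₀
  have hSd : HasDerivAt (fun t : ℝ => ∑ x, Q x * Real.exp (-(B x + t * A i x)))
      (∑ x, Q x * (Real.exp (-(B x + (0:ℝ) * A i x)) * (-(A i x)))) 0 := by
    apply HasDerivAt.fun_sum
    intro x _
    have h1 : HasDerivAt (fun t : ℝ => -(B x + t * A i x)) (-(A i x)) 0 :=
      ((hasDerivAt_mul_const (A i x)).const_add (B x)).neg
    exact (h1.exp).const_mul (Q x)
  have hhd : HasDerivAt h
      ((∑ x, Q x * (Real.exp (-(B x + (0:ℝ) * A i x)) * (-(A i x)))) /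
        (∑ x, Q x * Real.exp (-(B x + (0:ℝ) * A i x))) + Astar i) 0 := by
    have hlog := hSd.log hSpos.ne'
    have hlin : HasDerivAt (fun t : ℝ => (∑ j, α₀ j * Astar j) + t * Astar i) (Astar i) 0 :=
      (hasDerivAt_mul_const (Astar i)).const_add _
    have := hlog.add hlin
    exact this.congr_of_eventuallyEq (Filter.Eventually.of_forall fun t => (hheq t))
  have hmin : IsLocalMin h 0 := by
    apply Filter.Eventually.of_forall
    intro t
    have : h 0 = f α₀ := by
      simp only [hh]; congr 1; funext j; simp [hg]
    rw [this]
    exact hα₀ (g t)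
  have hd0 := hmin.deriv_eq_zero
  rw [hhd.deriv] at hd0
  -- identify with moment
  have hmom : moment Q A α₀ i =
      (∑ x, Q x * Real.exp (-(B x + (0:ℝ) * A i x)) * A i x) /
        (∑ x, Q x * Real.exp (-(B x + (0:ℝ) * A i x))) := by
    rw [hS0]
    simp only [moment, gibbs, hB]
    rw [Finset.sum_div]
    apply Finset.sum_congr rfl
    intro x _
    rw [zero_mul, add_zero]
    ring
  have hnum : (∑ x, Q x * (Real.exp (-(B x + (0:ℝ) * A i x)) * (-(A i x))))
      = -(∑ x, Q x * Real.exp (-(B x + (0:ℝ) * A i x)) * A i x) := by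
    rw [← Finset.sum_neg_distrib]
    apply Finset.sum_congr rfl
    intro x _
    ring
  rw [hnum, neg_div] at hd0
  rw [hmom]
  linarith
end

section
/- Contact structure of maximized entropy (the one-form ω = dS - ∑_i α_i dA_i vanishes along the Gibbs family): define S : ℝ^m → ℝ by S(α) = ∑_{i=1}^m α_i A_i(α) + log Z(α). Then S and each A_i are differentiable on ℝ^m, and for every α ∈ ℝ^m the total derivative of S at α equals ∑_{i=1}^m α_i times the total derivative of A_i at α, i.e. DS(α) = ∑_i α_i DA_i(α) as linear maps ℝ^m → ℝ. -/
open Finset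

/-- The maximized entropy as a function of the multipliers:
S(α) = ∑ᵢ αᵢ Aᵢ(α) + log Z(α). -/
noncomputable def maxEnt {X : Type*} [Fintype X] {m : ℕ}
    (Q : X → ℝ) (A : Fin m → X → ℝ) (α : Fin m → ℝ) : ℝ :=
  ∑ i, α i * moment Q A α i + Real.log (partitionZ Q A α)

section Aux

variable {X : Type*} [Fintype X] {m : ℕ}

/-- The linear functional α ↦ ∑ i, α i * A i x. -/
noncomputable def linA (A : Fin m → X → ℝ) (x : X) : (Fin m → ℝ) →L[ℝ] ℝ :=
  ∑ i, A i x • ContinuousLinearMap.proj i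

lemma linA_apply (A : Fin m → X → ℝ) (x : X) (α : Fin m → ℝ) :
    linA A x α = ∑ i, α i * A i x := by
  simp [linA, mul_comm]

lemma hasFDerivAt_term (Q : X → ℝ) (A : Fin m → X → ℝ) (x : X) (α : Fin m → ℝ) :
    HasFDerivAt (fun β : Fin m → ℝ => Q x * Real.exp (-∑ i, β i * A i x))
      ((Q x * Real.exp (-∑ i, α i * A i x)) • (-(linA A x))) α := by
  have h0 : HasFDerivAt (fun β : Fin m → ℝ => -∑ i, β i * A i x) (-(linA A x)) α := by
    have := ((linA A x).hasFDerivAt (x := α)).neg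
    have heq : (fun β : Fin m → ℝ => -(linA A x β)) =
        (fun β : Fin m → ℝ => -∑ i, β i * A i x) := by
      funext β; rw [linA_apply]
    rwa [show (-⇑(linA A x)) = (fun β : Fin m → ℝ => -(linA A x β)) from rfl, heq] at this
  have h2 := (h0.exp).const_mul (Q x)
  simpa [smul_smul] using h2

end Aux

/-- Contact structure of maximized entropy: S and each Aᵢ are differentiable
on ℝ^m, and for every α the total derivative of S at α equals ∑ᵢ αᵢ times the total
derivative of Aᵢ at α (i.e. the one-form ω = dS - ∑ᵢ αᵢ dAᵢ vanishes along the Gibbs family). -/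
theorem contact_structure {X : Type*} [Fintype X] [Nonempty X] {m : ℕ}
    (Q : X → ℝ) (hQpos : ∀ x, 0 < Q x) (hQsum : ∑ x, Q x = 1)
    (A : Fin m → X → ℝ) :
    Differentiable ℝ (maxEnt Q A) ∧
    (∀ i, Differentiable ℝ (fun α : Fin m → ℝ => moment Q A α i)) ∧
    ∀ α : Fin m → ℝ,
      fderiv ℝ (maxEnt Q A) α
        = ∑ i, α i • fderiv ℝ (fun β : Fin m → ℝ => moment Q A β i) α := by
  classical
  have hZpos : ∀ α, 0 < partitionZ Q A α := fun α =>
    Finset.sum_pos (fun x _ => mul_pos (hQpos x) (Real.exp_pos _)) Finset.univ_nonempty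
  have hZderiv : ∀ α : Fin m → ℝ, HasFDerivAt (partitionZ Q A)
      (∑ x, (Q x * Real.exp (-∑ i, α i * A i x)) • (-(linA A x))) α := by
    intro α
    exact HasFDerivAt.fun_sum (fun x _ => hasFDerivAt_term Q A x α)
  have hZdiff : Differentiable ℝ (partitionZ Q A) := fun α => (hZderiv α).differentiableAt
  have htermdiff : ∀ x : X, Differentiable ℝ
      (fun β : Fin m → ℝ => Q x * Real.exp (-∑ i, β i * A i x)) :=
    fun x β => (hasFDerivAt_term Q A x β).differentiableAt
  have hgibbsdiff : ∀ x : X, Differentiable ℝ (fun β => gibbs Q A β x) := by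
    intro x
    have h : Differentiable ℝ (fun β : Fin m → ℝ =>
        (Q x * Real.exp (-∑ i, β i * A i x)) * (partitionZ Q A β)⁻¹) :=
      fun β => (htermdiff x β).mul ((hZdiff β).inv (hZpos β).ne')
    simpa [gibbs, div_eq_mul_inv] using h
  have hmomdiff : ∀ i, Differentiable ℝ (fun β : Fin m → ℝ => moment Q A β i) := by
    intro i
    have : Differentiable ℝ (fun β : Fin m → ℝ => ∑ x, gibbs Q A β x * A i x) :=
      Differentiable.fun_sum (fun x _ => (hgibbsdiff x).mul_const _)
    exact this
  have hlog : ∀ α : Fin m → ℝ, HasFDerivAt (fun β => Real.log (partitionZ Q A β))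
      ((partitionZ Q A α)⁻¹ •
        ∑ x, (Q x * Real.exp (-∑ i, α i * A i x)) • (-(linA A x))) α :=
    fun α => (hZderiv α).log (hZpos α).ne'
  -- The key identity: d(log Z) = -∑ i, Aᵢ(α) dαᵢ
  have hkey : ∀ α : Fin m → ℝ,
      (partitionZ Q A α)⁻¹ •
        (∑ x, (Q x * Real.exp (-∑ i, α i * A i x)) • (-(linA A x)))
      = -∑ i, moment Q A α i • (ContinuousLinearMap.proj i :
          (Fin m → ℝ) →L[ℝ] ℝ) := by
    intro α
    have hZ' : partitionZ Q A α ≠ 0 := (hZpos α).ne'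
    ext v
    simp only [ContinuousLinearMap.smul_apply, ContinuousLinearMap.sum_apply,
      ContinuousLinearMap.neg_apply, linA_apply, moment, gibbs,
      ContinuousLinearMap.proj_apply, smul_eq_mul, mul_neg, Finset.mul_sum,
      Finset.sum_mul, ← Finset.sum_neg_distrib]
    rw [Finset.sum_comm]
    refine Finset.sum_congr rfl fun i _ => Finset.sum_congr rfl fun x _ => ?_
    field_simp
  have hSderiv : ∀ α : Fin m → ℝ, HasFDerivAt (maxEnt Q A)
      (∑ i, α i • fderiv ℝ (fun β : Fin m → ℝ => moment Q A β i) α) α := by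
    intro α
    have hterm : ∀ i : Fin m, HasFDerivAt (fun β : Fin m → ℝ => β i * moment Q A β i)
        (α i • fderiv ℝ (fun β : Fin m → ℝ => moment Q A β i) α +
          moment Q A α i • (ContinuousLinearMap.proj i : (Fin m → ℝ) →L[ℝ] ℝ)) α := by
      intro i
      have h1 : HasFDerivAt (fun β : Fin m → ℝ => β i)
          (ContinuousLinearMap.proj i : (Fin m → ℝ) →L[ℝ] ℝ) α :=
        (ContinuousLinearMap.proj i : (Fin m → ℝ) →L[ℝ] ℝ).hasFDerivAt
      have h2 : HasFDerivAt (fun β : Fin m → ℝ => moment Q A β i)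
          (fderiv ℝ (fun β : Fin m → ℝ => moment Q A β i) α) α :=
        ((hmomdiff i) α).hasFDerivAt
      exact h1.mul h2
    have hsum := HasFDerivAt.fun_sum (fun i (_ : i ∈ Finset.univ) => hterm i)
    have htot := hsum.add (hlog α)
    rw [hkey α] at htot
    have : (∑ i, (α i • fderiv ℝ (fun β : Fin m → ℝ => moment Q A β i) α +
        moment Q A α i • (ContinuousLinearMap.proj i : (Fin m → ℝ) →L[ℝ] ℝ))) +
        (-∑ i, moment Q A α i • (ContinuousLinearMap.proj i : (Fin m → ℝ) →L[ℝ] ℝ))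
        = ∑ i, α i • fderiv ℝ (fun β : Fin m → ℝ => moment Q A β i) α := by
      rw [Finset.sum_add_distrib]
      abel
    rw [this] at htot
    exact htot
  refine ⟨fun α => (hSderiv α).differentiableAt, hmomdiff, fun α => (hSderiv α).fderiv⟩
end

section
/- Finite analog of the fundamental theorem of classical DFT (the intrinsic free energy is a functional of the density alone, independent of the external potential): assume that the only function c : Λ → ℝ for which x ↦ ∑_{ℓ∈Λ} c(ℓ) n̂_ℓ(x) is constant on X is c = 0. Fix β > 0. For an external potential v : Λ → ℝ and a multiplier α : Λ → ℝ, set ᾱ = βv + α, let Z(ᾱ) = ∑_{x∈X} Q(x) exp(-βH₀(x) - ∑_{ℓ∈Λ} ᾱ(ℓ) n̂_ℓ(x)), let the Gibbs distribution be P_ᾱ(x) = Q(x) exp(-βH₀(x) - ∑_ℓ ᾱ(ℓ) n̂_ℓ(x))/Z(ᾱ), let the density be n(ᾱ)(ℓ) = ∑_{x∈X} P_ᾱ(x) n̂_ℓ(x), and define the intrinsic free energy by βF(v,α) = log Z(βv+α) + ∑_{ℓ∈Λ} (βv(ℓ)+α(ℓ)) n(βv+α)(ℓ). If two pairs (v,α)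 and (v',α') of external potentials and multipliers produce the same density, n(βv+α) = n(βv'+α'), then βv + α = βv' + α' and consequently F(v,α) = F(v',α'). -/
open Finset

/-- Partition function Z(ᾱ) = ∑ₓ Q x exp(-βH₀ x - ∑_ℓ ᾱ ℓ n̂_ℓ x). -/
noncomputable def Zdft {X Λ : Type*} [Fintype X] [Fintype Λ]
    (Q : X → ℝ) (H₀ : X → ℝ) (nh : Λ → X → ℝ) (β : ℝ) (ab : Λ → ℝ) : ℝ :=
  ∑ x, Q x * Real.exp (-β * H₀ x - ∑ ℓ, ab ℓ * nh ℓ x)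

/-- Gibbs distribution P_ᾱ(x) = Q x exp(-βH₀ x - ∑_ℓ ᾱ ℓ n̂_ℓ x) / Z(ᾱ). -/
noncomputable def gibbsDFT {X Λ : Type*} [Fintype X] [Fintype Λ]
    (Q : X → ℝ) (H₀ : X → ℝ) (nh : Λ → X → ℝ) (β : ℝ) (ab : Λ → ℝ) (x : X) : ℝ :=
  Q x * Real.exp (-β * H₀ x - ∑ ℓ, ab ℓ * nh ℓ x) / Zdft Q H₀ nh β ab

/-- Density n(ᾱ)(ℓ) = ∑ₓ P_ᾱ(x) n̂_ℓ(x). -/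
noncomputable def densityDFT {X Λ : Type*} [Fintype X] [Fintype Λ]
    (Q : X → ℝ) (H₀ : X → ℝ) (nh : Λ → X → ℝ) (β : ℝ) (ab : Λ → ℝ) (ℓ : Λ) : ℝ :=
  ∑ x, gibbsDFT Q H₀ nh β ab x * nh ℓ x

/-- Intrinsic free energy: βF(v,α) = log Z(βv+α) + ∑_ℓ (βv(ℓ)+α(ℓ)) n(βv+α)(ℓ). -/
noncomputable def intrinsicF {X Λ : Type*} [Fintype X] [Fintype Λ]
    (Q : X → ℝ) (H₀ : X → ℝ) (nh : Λ → X → ℝ) (β : ℝ) (v α : Λ → ℝ) : ℝ :=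
  (Real.log (Zdft Q H₀ nh β (β • v + α))
    + ∑ ℓ, (β * v ℓ + α ℓ) * densityDFT Q H₀ nh β (β • v + α) ℓ) / β

/-- Finite analog of the fundamental theorem of classical DFT: assuming the
density observables are affinely independent, if two pairs (v,α), (v',α') of external
potentials and multipliers produce the same density, then βv + α = βv' + α' and
consequently the intrinsic free energies agree: F(v,α) = F(v',α'). -/
theorem intrinsicF_depends_only_on_density {X Λ : Type*}
    [Fintype X] [Nonempty X] [Fintype Λ] [Nonempty Λ]
    (Q : X → ℝ) (hQpos : ∀ x, 0 < Q x) (hQsum : ∑ x, Q x = 1)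
    (H₀ : X → ℝ) (nh : Λ → X → ℝ)
    (hindep : ∀ c : Λ → ℝ, (∀ x y : X, ∑ ℓ, c ℓ * nh ℓ x = ∑ ℓ, c ℓ * nh ℓ y) → c = 0)
    (β : ℝ) (hβ : 0 < β) (v v' α α' : Λ → ℝ)
    (hsame : densityDFT Q H₀ nh β (β • v + α) = densityDFT Q H₀ nh β (β • v' + α')) :
    β • v + α = β • v' + α' ∧ intrinsicF Q H₀ nh β v α = intrinsicF Q H₀ nh β v' α' := by
  set a := β • v + α with ha
  set b := β • v' + α' with hb
  have hZ : ∀ ab : Λ → ℝ, 0 < Zdft Q H₀ nh β ab := fun ab =>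
    Finset.sum_pos (fun x _ => mul_pos (hQpos x) (Real.exp_pos _)) Finset.univ_nonempty
  have hP : ∀ (ab : Λ → ℝ) x, 0 < gibbsDFT Q H₀ nh β ab x := fun ab x =>
    div_pos (mul_pos (hQpos x) (Real.exp_pos _)) (hZ ab)
  have hPsum : ∀ ab : Λ → ℝ, ∑ x, gibbsDFT Q H₀ nh β ab x = 1 := by
    intro ab
    unfold gibbsDFT
    rw [← Finset.sum_div]
    exact div_self (hZ ab).ne'
  have hlog : ∀ (ab : Λ → ℝ) x, Real.log (gibbsDFT Q H₀ nh β ab x)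
      = Real.log (Q x) + (-β * H₀ x - ∑ ℓ, ab ℓ * nh ℓ x)
        - Real.log (Zdft Q H₀ nh β ab) := by
    intro ab x
    unfold gibbsDFT
    rw [Real.log_div (mul_pos (hQpos x) (Real.exp_pos _)).ne' (hZ ab).ne',
      Real.log_mul (hQpos x).ne' (Real.exp_pos _).ne', Real.log_exp]
  set P := gibbsDFT Q H₀ nh β a with hPdef
  set P' := gibbsDFT Q H₀ nh β b with hP'def
  have hLform : ∀ x, Real.log (P x) - Real.log (P' x)
      = (∑ ℓ, (b ℓ - a ℓ) * nh ℓ x)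
        + (Real.log (Zdft Q H₀ nh β b) - Real.log (Zdft Q H₀ nh β a)) := by
    intro x
    rw [hPdef, hP'def, hlog a x, hlog b x]
    simp only [sub_mul, Finset.sum_sub_distrib]
    ring
  have hS : ∑ x, (P x - P' x) * (Real.log (P x) - Real.log (P' x)) = 0 := by
    have key : ∀ x, (P x - P' x) * (Real.log (P x) - Real.log (P' x))
        = (∑ ℓ, (b ℓ - a ℓ) * ((P x - P' x) * nh ℓ x))
          + (Real.log (Zdft Q H₀ nh β b) - Real.log (Zdft Q H₀ nh β a)) * (P x - P' x) := by
      intro x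
      rw [hLform x, mul_add, Finset.mul_sum]
      congr 1
      · exact Finset.sum_congr rfl fun ℓ _ => by ring
      · ring
    rw [Finset.sum_congr rfl fun x _ => key x, Finset.sum_add_distrib, ← Finset.mul_sum,
      Finset.sum_sub_distrib, hPsum a, hPsum b, sub_self, mul_zero, add_zero,
      Finset.sum_comm]
    apply Finset.sum_eq_zero
    intro ℓ _
    rw [← Finset.mul_sum]
    have hd : ∑ x, (P x - P' x) * nh ℓ x
        = densityDFT Q H₀ nh β a ℓ - densityDFT Q H₀ nh β b ℓ := by
      unfold densityDFT
      rw [← Finset.sum_sub_distrib]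
      exact Finset.sum_congr rfl fun x _ => by ring
    rw [hd, hsame, sub_self, mul_zero]
  have hnn : ∀ x ∈ Finset.univ (α := X),
      0 ≤ (P x - P' x) * (Real.log (P x) - Real.log (P' x)) := by
    intro x _
    rcases le_total (P' x) (P x) with h | h
    · have hl : Real.log (P' x) ≤ Real.log (P x) := Real.log_le_log (hP b x) h
      exact mul_nonneg (by linarith) (by linarith)
    · have hl : Real.log (P x) ≤ Real.log (P' x) := Real.log_le_log (hP a x) h
      nlinarith
  have hterm0 : ∀ x, (P x - P' x) * (Real.log (P x) - Real.log (P' x)) = 0 := fun x =>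
    (Finset.sum_eq_zero_iff_of_nonneg hnn).mp hS x (Finset.mem_univ x)
  have hPeq : ∀ x, P x = P' x := by
    intro x
    by_contra hne
    rcases lt_or_gt_of_ne hne with h | h
    · have h1 : Real.log (P x) < Real.log (P' x) := Real.log_lt_log (hP a x) h
      have h2 := hterm0 x
      nlinarith
    · have h1 : Real.log (P' x) < Real.log (P x) := Real.log_lt_log (hP b x) h
      have h2 := hterm0 x
      nlinarith
  have hconst : ∀ x y : X, ∑ ℓ, (b ℓ - a ℓ) * nh ℓ x = ∑ ℓ, (b ℓ - a ℓ) * nh ℓ y := by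
    intro x y
    have hx := hLform x
    have hy := hLform y
    rw [hPeq x, sub_self] at hx
    rw [hPeq y, sub_self] at hy
    linarith
  have hc := hindep _ hconst
  have hab : a = b := by
    funext ℓ
    have h := congrFun hc ℓ
    simp only [Pi.zero_apply] at h
    linarith
  refine ⟨hab, ?_⟩
  unfold intrinsicF
  rw [← ha, ← hb, hab]
  have hpt : ∀ ℓ, β * v ℓ + α ℓ = β * v' ℓ + α' ℓ := by
    intro ℓ
    have h := congrFun hab ℓ
    simp only [ha, hb, Pi.add_apply, Pi.smul_apply, smul_eq_mul] at h
    exact h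
  simp only [hpt]
end

section
/- Concavity of the maximized entropy as a function of the constraint values: let C ⊆ ℝ^m be the set of vectors A for which there exists a probability distribution P on X with ∑_{x∈X} P(x) Â_i(x) = A_i for all i. Then C is convex, and the function Ŝ : C → ℝ defined by Ŝ(A) = sup { S_r[P|Q] : P a probability distribution on X with ∑_x P(x) Â_i(x) = A_i for all i } is concave on C. -/
open Finset

/-- The set of achievable constraint values:
C = {A ∈ ℝ^m | ∃ probability distribution P with ∑ₓ P x Âᵢ x = Aᵢ for all i}. -/
def achievable {X : Type*} [Fintype X] {m : ℕ} (A : Fin m → X → ℝ) :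
    Set (Fin m → ℝ) :=
  {a | ∃ P : X → ℝ, (∀ x, 0 ≤ P x) ∧ (∑ x, P x = 1) ∧ ∀ i, ∑ x, P x * A i x = a i}

/-- The maximized entropy as a function of the constraint values:
Ŝ(A) = sup { S_r[P|Q] : P a probability distribution with moments A }. -/
noncomputable def maxEntOfConstraints {X : Type*} [Fintype X] {m : ℕ}
    (Q : X → ℝ) (A : Fin m → X → ℝ) (a : Fin m → ℝ) : ℝ :=
  sSup {s | ∃ P : X → ℝ, (∀ x, 0 ≤ P x) ∧ (∑ x, P x = 1) ∧
    (∀ i, ∑ x, P x * A i x = a i) ∧ s = relEnt P Q}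

/-- Gibbs inequality: relEnt is nonpositive. -/
lemma relEnt_nonpos {X : Type*} [Fintype X] (P Q : X → ℝ)
    (hP : ∀ x, 0 ≤ P x) (hPsum : ∑ x, P x = 1)
    (hQ : ∀ x, 0 < Q x) (hQsum : ∑ x, Q x = 1) : relEnt P Q ≤ 0 := by
  have key : ∀ x, P x - Q x ≤ P x * Real.log (P x / Q x) := by
    intro x
    rcases eq_or_lt_of_le (hP x) with h0 | hpos
    · simp [← h0]
      linarith [(hQ x).le]
    · have hq := hQ x
      have h1 : Real.log (Q x / P x) ≤ Q x / P x - 1 :=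
        Real.log_le_sub_one_of_pos (by positivity)
      have h2 : Real.log (Q x / P x) = - Real.log (P x / Q x) := by
        rw [← Real.log_inv]; congr 1; field_simp
      rw [h2] at h1
      have h3 : 1 - Q x / P x ≤ Real.log (P x / Q x) := by linarith
      have := mul_le_mul_of_nonneg_left h3 (hP x)
      calc P x - Q x = P x * (1 - Q x / P x) := by field_simp
        _ ≤ P x * Real.log (P x / Q x) := this
  have : (0 : ℝ) ≤ ∑ x, P x * Real.log (P x / Q x) := by
    calc (0 : ℝ) = ∑ x, (P x - Q x) := by rw [Finset.sum_sub_distrib, hPsum, hQsum]; ring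
      _ ≤ _ := Finset.sum_le_sum fun x _ => key x
  simp only [relEnt]; linarith

lemma mul_log_div_convex_ineq {p₁ p₂ q t s : ℝ} (hp₁ : 0 ≤ p₁) (hp₂ : 0 ≤ p₂)
    (hq : 0 < q) (ht : 0 ≤ t) (hs : 0 ≤ s) (hts : t + s = 1) :
    (t * p₁ + s * p₂) * Real.log ((t * p₁ + s * p₂) / q) ≤
      t * (p₁ * Real.log (p₁ / q)) + s * (p₂ * Real.log (p₂ / q)) := by
  have key : ∀ p : ℝ, 0 ≤ p → p * Real.log (p / q) = p * Real.log p - Real.log q * p := by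
    intro p hp
    rcases eq_or_lt_of_le hp with h0 | hpos
    · simp [← h0]
    · rw [Real.log_div hpos.ne' hq.ne']; ring
  have hmix : 0 ≤ t * p₁ + s * p₂ := by positivity
  rw [key _ hp₁, key _ hp₂, key _ hmix]
  have hconv := Real.convexOn_mul_log.2 (Set.mem_Ici.2 hp₁) (Set.mem_Ici.2 hp₂) ht hs hts
  simp only [smul_eq_mul] at hconv
  nlinarith [hconv]

/-- If t*u + c ≤ M for all u in nonempty bounded S, then t * sSup S + c ≤ M. -/
lemma step_csSup {S : Set ℝ} (hne : S.Nonempty) (hbdd : BddAbove S) {t c M : ℝ}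
    (ht : 0 ≤ t) (h : ∀ u ∈ S, t * u + c ≤ M) : t * sSup S + c ≤ M := by
  rcases eq_or_lt_of_le ht with h0 | htpos
  · obtain ⟨u, hu⟩ := hne
    have := h u hu
    simp [← h0] at this ⊢
    linarith
  · have hle : sSup S ≤ (M - c) / t := by
      apply csSup_le hne
      intro u hu
      rw [le_div_iff₀ htpos]
      linarith [h u hu]
    have := (le_div_iff₀ htpos).mp hle
    linarith

/-- Concavity of the maximized entropy as a function of the constraint
values: the set C of achievable constraint vectors is convex and Ŝ is concave on C. -/
theorem maxEnt_concave_in_constraints {X : Type*} [Fintype X] [Nonempty X] {m : ℕ}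
    (Q : X → ℝ) (hQpos : ∀ x, 0 < Q x) (hQsum : ∑ x, Q x = 1)
    (A : Fin m → X → ℝ) :
    Convex ℝ (achievable A) ∧
    ConcaveOn ℝ (achievable A) (maxEntOfConstraints Q A) := by
  have hconvex : Convex ℝ (achievable A) := by
    intro a ha b hb t s ht hs hts
    obtain ⟨P₁, hP₁n, hP₁s, hP₁m⟩ := ha
    obtain ⟨P₂, hP₂n, hP₂s, hP₂m⟩ := hb
    refine ⟨fun x => t * P₁ x + s * P₂ x, fun x => add_nonneg (mul_nonneg ht (hP₁n x)) (mul_nonneg hs (hP₂n x)), ?_, ?_⟩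
    · rw [Finset.sum_add_distrib, ← Finset.mul_sum, ← Finset.mul_sum, hP₁s, hP₂s]
      simpa using hts
    · intro i
      simp only [add_mul, Finset.sum_add_distrib, mul_assoc, ← Finset.mul_sum,
        hP₁m i, hP₂m i]
      simp [Pi.add_apply, Pi.smul_apply, smul_eq_mul]
  refine ⟨hconvex, hconvex, ?_⟩
  intro a ha b hb t s ht hs hts
  set Sa := {r | ∃ P : X → ℝ, (∀ x, 0 ≤ P x) ∧ (∑ x, P x = 1) ∧
    (∀ i, ∑ x, P x * A i x = a i) ∧ r = relEnt P Q} with hSa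
  set Sb := {r | ∃ P : X → ℝ, (∀ x, 0 ≤ P x) ∧ (∑ x, P x = 1) ∧
    (∀ i, ∑ x, P x * A i x = b i) ∧ r = relEnt P Q} with hSb
  have hSane : Sa.Nonempty := by
    obtain ⟨P, h1, h2, h3⟩ := ha
    exact ⟨relEnt P Q, P, h1, h2, h3, rfl⟩
  have hSbne : Sb.Nonempty := by
    obtain ⟨P, h1, h2, h3⟩ := hb
    exact ⟨relEnt P Q, P, h1, h2, h3, rfl⟩
  have hSabdd : BddAbove Sa := by
    refine ⟨0, fun r hr => ?_⟩
    obtain ⟨P, h1, h2, _, h4⟩ := hr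
    rw [h4]; exact relEnt_nonpos P Q h1 h2 hQpos hQsum
  have hSbbdd : BddAbove Sb := by
    refine ⟨0, fun r hr => ?_⟩
    obtain ⟨P, h1, h2, _, h4⟩ := hr
    rw [h4]; exact relEnt_nonpos P Q h1 h2 hQpos hQsum
  have key : ∀ u ∈ Sa, ∀ v ∈ Sb, t * u + s * v ≤
      maxEntOfConstraints Q A (t • a + s • b) := by
    intro u hu v hv
    obtain ⟨P₁, hP₁n, hP₁s, hP₁m, hu'⟩ := hu
    obtain ⟨P₂, hP₂n, hP₂s, hP₂m, hv'⟩ := hv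
    set P := fun x => t * P₁ x + s * P₂ x with hP
    have hPn : ∀ x, 0 ≤ P x := fun x => add_nonneg (mul_nonneg ht (hP₁n x)) (mul_nonneg hs (hP₂n x))
    have hPs : ∑ x, P x = 1 := by
      simp only [hP, Finset.sum_add_distrib, ← Finset.mul_sum, hP₁s, hP₂s]
      simpa using hts
    have hPm : ∀ i, ∑ x, P x * A i x = (t • a + s • b) i := by
      intro i
      simp only [hP, add_mul, Finset.sum_add_distrib, mul_assoc, ← Finset.mul_sum,
        hP₁m i, hP₂m i]
      simp [Pi.add_apply, Pi.smul_apply, smul_eq_mul]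
    have hrel : t * relEnt P₁ Q + s * relEnt P₂ Q ≤ relEnt P Q := by
      simp only [relEnt, hP]
      have : ∑ x, (t * P₁ x + s * P₂ x) * Real.log ((t * P₁ x + s * P₂ x) / Q x) ≤
          ∑ x, (t * (P₁ x * Real.log (P₁ x / Q x)) + s * (P₂ x * Real.log (P₂ x / Q x))) :=
        Finset.sum_le_sum fun x _ =>
          mul_log_div_convex_ineq (hP₁n x) (hP₂n x) (hQpos x) ht hs hts
      rw [Finset.sum_add_distrib, ← Finset.mul_sum, ← Finset.mul_sum] at this
      linarith
    have hmem : relEnt P Q ∈ {r | ∃ P : X → ℝ, (∀ x, 0 ≤ P x) ∧ (∑ x, P x = 1) ∧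
        (∀ i, ∑ x, P x * A i x = (t • a + s • b) i) ∧ r = relEnt P Q} :=
      ⟨P, hPn, hPs, hPm, rfl⟩
    have hbdd : BddAbove {r | ∃ P : X → ℝ, (∀ x, 0 ≤ P x) ∧ (∑ x, P x = 1) ∧
        (∀ i, ∑ x, P x * A i x = (t • a + s • b) i) ∧ r = relEnt P Q} := by
      refine ⟨0, fun r hr => ?_⟩
      obtain ⟨P', h1, h2, _, h4⟩ := hr
      rw [h4]; exact relEnt_nonpos P' Q h1 h2 hQpos hQsum
    have hle : relEnt P Q ≤ maxEntOfConstraints Q A (t • a + s • b) :=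
      le_csSup hbdd hmem
    rw [hu', hv']
    linarith
  have step1 : ∀ v ∈ Sb, t * sSup Sa + s * v ≤
      maxEntOfConstraints Q A (t • a + s • b) := by
    intro v hv
    exact step_csSup hSane hSabdd ht fun u hu => key u hu v hv
  have step2 : s * sSup Sb + t * sSup Sa ≤ maxEntOfConstraints Q A (t • a + s • b) :=
    step_csSup hSbne hSbbdd hs fun v hv => by linarith [step1 v hv]
  simp only [smul_eq_mul]
  show t * sSup Sa + s * sSup Sb ≤ maxEntOfConstraints Q A (t • a + s • b)
  linarith
end

section
/- The maximized entropy is the Legendre–Fenchel dual value of the log-partition function: define S(α) = ∑_{i=1}^m α_i A_i(α) + log Z(α). Then for every α*, α ∈ ℝ^m, S(α*) ≤ ∑_{i=1}^m α_i A_i(α*) + log Z(α); that is, α* achieves the infimum of α ↦ ⟨α, A(α*)⟩ + log Z(α) over ℝ^m. -/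
open Finset

set_option maxHeartbeats 1000000 in
/-- The maximized entropy is the Legendre–Fenchel dual value of the
log-partition function: for every α*, α ∈ ℝ^m,
S(α*) ≤ ∑ᵢ αᵢ Aᵢ(α*) + log Z(α); i.e. α* achieves the infimum of
α ↦ ⟨α, A(α*)⟩ + log Z(α). -/
theorem maxEnt_legendre_fenchel {X : Type*} [Fintype X] [Nonempty X] {m : ℕ}
    (Q : X → ℝ) (hQpos : ∀ x, 0 < Q x) (hQsum : ∑ x, Q x = 1)
    (A : Fin m → X → ℝ) (αstar α : Fin m → ℝ) :
    maxEnt Q A αstar ≤ ∑ i, α i * moment Q A αstar i + Real.log (partitionZ Q A α) := by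
  classical
  set f : X → ℝ := fun x => Q x * Real.exp (-∑ i, αstar i * A i x) with hf
  set g : X → ℝ := fun x => Q x * Real.exp (-∑ i, α i * A i x) with hg
  have hfpos : ∀ x, 0 < f x := fun x => mul_pos (hQpos x) (Real.exp_pos _)
  have hgpos : ∀ x, 0 < g x := fun x => mul_pos (hQpos x) (Real.exp_pos _)
  have hZsD : partitionZ Q A αstar = ∑ x, f x := rfl
  have hZD : partitionZ Q A α = ∑ x, g x := rfl
  have hZs : 0 < partitionZ Q A αstar := by
    rw [hZsD]; exact Finset.sum_pos (fun x _ => hfpos x) Finset.univ_nonempty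
  have hZ : 0 < partitionZ Q A α := by
    rw [hZD]; exact Finset.sum_pos (fun x _ => hgpos x) Finset.univ_nonempty
  set Zs := partitionZ Q A αstar with hZsdef
  set Z := partitionZ Q A α with hZdef
  have hgibbs : ∀ x, gibbs Q A αstar x = f x / Zs := fun x => rfl
  have hnorm : ∑ x, f x / Zs = 1 := by
    rw [← Finset.sum_div, ← hZsD, div_self hZs.ne']
  -- key inequality via log t ≤ t - 1
  have key : ∑ x, (f x / Zs) * Real.log ((g x * Zs) / (f x * Z)) ≤ 0 := by
    have hle : ∀ x ∈ Finset.univ, (f x / Zs) * Real.log ((g x * Zs) / (f x * Z))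
        ≤ g x / Z - f x / Zs := by
      intro x _
      have hfx := hfpos x
      have hgx := hgpos x
      have ht : 0 < (g x * Zs) / (f x * Z) := by positivity
      have hlog := Real.log_le_sub_one_of_pos ht
      have hw : 0 < f x / Zs := by positivity
      have h1 : (f x / Zs) * Real.log ((g x * Zs) / (f x * Z))
          ≤ (f x / Zs) * ((g x * Zs) / (f x * Z) - 1) :=
        mul_le_mul_of_nonneg_left hlog hw.le
      have h2 : (f x / Zs) * ((g x * Zs) / (f x * Z) - 1) = g x / Z - f x / Zs := by
        field_simp
      linarith
    calc ∑ x, (f x / Zs) * Real.log ((g x * Zs) / (f x * Z))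
        ≤ ∑ x, (g x / Z - f x / Zs) := Finset.sum_le_sum hle
      _ = (∑ x, g x) / Z - (∑ x, f x) / Zs := by
          rw [Finset.sum_sub_distrib, Finset.sum_div, Finset.sum_div]
      _ = 0 := by rw [← hZD, ← hZsD, div_self hZ.ne', div_self hZs.ne']; ring
  -- expand the log
  have hlogexp : ∀ x, Real.log ((g x * Zs) / (f x * Z))
      = (∑ i, (αstar i - α i) * A i x) + (Real.log Zs - Real.log Z) := by
    intro x
    have hfx := hfpos x
    have hgx := hgpos x
    have hlg : Real.log (g x) = Real.log (Q x) + (-∑ i, α i * A i x) := by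
      rw [hg]
      simp only
      rw [Real.log_mul (hQpos x).ne' (Real.exp_pos _).ne', Real.log_exp]
    have hlf : Real.log (f x) = Real.log (Q x) + (-∑ i, αstar i * A i x) := by
      rw [hf]
      simp only
      rw [Real.log_mul (hQpos x).ne' (Real.exp_pos _).ne', Real.log_exp]
    have hsum : ∑ i, (αstar i - α i) * A i x
        = (∑ i, αstar i * A i x) - ∑ i, α i * A i x := by
      rw [← Finset.sum_sub_distrib]
      exact Finset.sum_congr rfl fun i _ => by ring
    rw [Real.log_div (by positivity) (by positivity),
        Real.log_mul hgx.ne' hZs.ne', Real.log_mul hfx.ne' hZ.ne',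
        hlg, hlf, hsum]
    ring
  have key2 : ∑ x, (f x / Zs) * Real.log ((g x * Zs) / (f x * Z))
      = (∑ i, (αstar i - α i) * moment Q A αstar i) + (Real.log Zs - Real.log Z) := by
    calc ∑ x, (f x / Zs) * Real.log ((g x * Zs) / (f x * Z))
        = ∑ x, ((∑ i, (f x / Zs) * ((αstar i - α i) * A i x))
            + (f x / Zs) * (Real.log Zs - Real.log Z)) := by
          refine Finset.sum_congr rfl fun x _ => ?_
          rw [hlogexp x, mul_add, Finset.mul_sum]
      _ = (∑ x, ∑ i, (f x / Zs) * ((αstar i - α i) * A i x))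
            + (∑ x, f x / Zs) * (Real.log Zs - Real.log Z) := by
          rw [Finset.sum_add_distrib, ← Finset.sum_mul]
      _ = (∑ i, (αstar i - α i) * moment Q A αstar i) + (Real.log Zs - Real.log Z) := by
          rw [hnorm, one_mul, Finset.sum_comm]
          congr 1
          refine Finset.sum_congr rfl fun i _ => ?_
          unfold moment
          rw [Finset.mul_sum]
          refine Finset.sum_congr rfl fun x _ => ?_
          rw [hgibbs x]; ring
  rw [key2] at key
  have hms : ∑ i, (αstar i - α i) * moment Q A αstar i
      = ∑ i, αstar i * moment Q A αstar i - ∑ i, α i * moment Q A αstar i := by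
    rw [← Finset.sum_sub_distrib]
    exact Finset.sum_congr rfl fun i _ => by ring
  unfold maxEnt
  rw [hms] at key
  linarith
end
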